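/- For every real parameter a and every differentiable function f : ℝ → ℝ, the vortex-plug vector field V_{a,f} is divergence-free: at every point p ∈ ℝ³, V_{a,f} is differentiable and the trace of its Fréchet derivative at p equals 0. -/

import Mathlib

/-- `H_a(x,y,z) = (x² + y²)(x² + y² + z² + a)`. -/
noncomputable def Ha3 (a : ℝ) : ℝ × ℝ × ℝ → ℝ :=
  fun p => (p.1 ^ 2 + p.2.1 ^ 2) * (p.1 ^ 2 + p.2.1 ^ 2 + p.2.2 ^ 2 + a)

/-- The vortex-plug vector field
`V_{a,f}(x,y,z) = (−2xz − f(H_a)·y, −2yz + f(H_a)·x, 2(2(x²+y²)+z²+a))`. -/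
noncomputable def Vaf (a : ℝ) (f : ℝ → ℝ) : ℝ × ℝ × ℝ → ℝ × ℝ × ℝ :=
  fun p =>
    (-2 * p.1 * p.2.2 - f (Ha3 a p) * p.2.1,
      -2 * p.2.1 * p.2.2 + f (Ha3 a p) * p.1,
      2 * (2 * (p.1 ^ 2 + p.2.1 ^ 2) + p.2.2 ^ 2 + a))

/-! The divergence is `∂ₓV₁ + ∂ᵧV₂ + ∂_zV₃`. The terms without `f` give `-2z - 2z + 4z = 0`.
Since `H_a` depends on `x, y` only through `x² + y²`, we have `y ∂ₓH_a = x ∂ᵧH_a`, so the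
terms `∓ f'(H_a) y ∂ₓH_a` and `± f'(H_a) x ∂ᵧH_a` cancel as well. -/

open LinearMap in
theorem LinearMap.trace_prod {R M N : Type*} [CommRing R] [AddCommGroup M] [Module R M]
    [Module.Free R M] [Module.Finite R M] [AddCommGroup N] [Module R N] [Module.Free R N]
    [Module.Finite R N] (L : M × N →ₗ[R] M × N) :
    trace R (M × N) L = trace R M (fst R M N ∘ₗ L ∘ₗ inl R M N)
      + trace R N (snd R M N ∘ₗ L ∘ₗ inr R M N) := by
  have hL : L = (L ∘ₗ inl R M N) ∘ₗ fst R M N + (L ∘ₗ inr R M N) ∘ₗ snd R M N := by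
    ext <;> simp [Prod.mk_zero_zero]
  conv_lhs => rw [hL]
  rw [map_add, trace_comp_comm' (fst R M N), trace_comp_comm' (snd R M N)]

theorem LinearMap.trace_self_eq_apply_one {R : Type*} [CommRing R] (L : R →ₗ[R] R) :
    trace R R L = L 1 := by
  have hL : L = LinearMap.id.smulRight (L 1) := by ext; simp
  rw [hL, trace_smulRight]
  simp

theorem LinearMap.trace_prod_prod {R : Type*} [CommRing R] (L : R × R × R →ₗ[R] R × R × R) :
    trace R (R × R × R) L = (L (1, 0, 0)).1 + (L (0, 1, 0)).2.1 + (L (0, 0, 1)).2.2 := by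
  rw [trace_prod, trace_prod, trace_self_eq_apply_one, trace_self_eq_apply_one,
    trace_self_eq_apply_one, add_assoc]
  rfl

theorem trace_eq_sum_partials {V : ℝ × ℝ × ℝ → ℝ × ℝ × ℝ} {L : ℝ × ℝ × ℝ →L[ℝ] ℝ × ℝ × ℝ}
    {x y z d₁ d₂ d₃ : ℝ} (hV : HasFDerivAt V L (x, y, z))
    (h₁ : HasDerivAt (fun t => (V (t, y, z)).1) d₁ x)
    (h₂ : HasDerivAt (fun t => (V (x, t, z)).2.1) d₂ y)
    (h₃ : HasDerivAt (fun t => (V (x, y, t)).2.2) d₃ z) :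
    LinearMap.trace ℝ _ L.toLinearMap = d₁ + d₂ + d₃ := by
  have e₁ := hasFDerivAt_fst.comp_hasDerivAt x <| hV.comp_hasDerivAt x <|
    (hasDerivAt_id x).prodMk ((hasDerivAt_const x y).prodMk (hasDerivAt_const x z))
  have e₂ := hasFDerivAt_fst.comp_hasDerivAt y <| hasFDerivAt_snd.comp_hasDerivAt y <|
    hV.comp_hasDerivAt y <|
      (hasDerivAt_const y x).prodMk ((hasDerivAt_id y).prodMk (hasDerivAt_const y z))
  have e₃ := hasFDerivAt_snd.comp_hasDerivAt z <| hasFDerivAt_snd.comp_hasDerivAt z <|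
    hV.comp_hasDerivAt z <|
      (hasDerivAt_const z x).prodMk ((hasDerivAt_const z y).prodMk (hasDerivAt_id z))
  rw [LinearMap.trace_prod_prod, h₁.unique e₁, h₂.unique e₂, h₃.unique e₃]
  rfl

theorem differentiable_Vaf (a : ℝ) {f : ℝ → ℝ} (hf : Differentiable ℝ f) :
    Differentiable ℝ (Vaf a f) := by
  unfold Vaf Ha3
  fun_prop

theorem hasDerivAt_Ha3_x (a x y z : ℝ) :
    HasDerivAt (fun t => Ha3 a (t, y, z)) (2 * x * (2 * (x ^ 2 + y ^ 2) + z ^ 2 + a)) x := by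
  have hr : HasDerivAt (fun t => t ^ 2 + y ^ 2) (2 * x) x := by
    simpa using (hasDerivAt_pow 2 x).add_const (y ^ 2)
  refine (hr.mul ((hr.add_const (z ^ 2)).add_const a)).congr_deriv ?_
  ring

theorem hasDerivAt_Ha3_y (a x y z : ℝ) :
    HasDerivAt (fun t => Ha3 a (x, t, z)) (2 * y * (2 * (x ^ 2 + y ^ 2) + z ^ 2 + a)) y := by
  have hr : HasDerivAt (fun t => x ^ 2 + t ^ 2) (2 * y) y := by
    simpa using (hasDerivAt_pow 2 y).const_add (x ^ 2)
  refine (hr.mul ((hr.add_const (z ^ 2)).add_const a)).congr_deriv ?_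
  ring

theorem hasDerivAt_Vaf₁_x (a : ℝ) {f : ℝ → ℝ} (hf : Differentiable ℝ f) (x y z : ℝ) :
    HasDerivAt (fun t => (Vaf a f (t, y, z)).1)
      (-2 * z - deriv f (Ha3 a (x, y, z)) * (2 * x * (2 * (x ^ 2 + y ^ 2) + z ^ 2 + a)) * y) x := by
  have hfH := (hf _).hasDerivAt.comp x (hasDerivAt_Ha3_x a x y z)
  refine ((((hasDerivAt_id x).const_mul (-2)).mul_const z).sub (hfH.mul_const y)).congr_deriv ?_
  ring

theorem hasDerivAt_Vaf₂_y (a : ℝ) {f : ℝ → ℝ} (hf : Differentiable ℝ f) (x y z : ℝ) :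
    HasDerivAt (fun t => (Vaf a f (x, t, z)).2.1)
      (-2 * z + deriv f (Ha3 a (x, y, z)) * (2 * y * (2 * (x ^ 2 + y ^ 2) + z ^ 2 + a)) * x) y := by
  have hfH := (hf _).hasDerivAt.comp y (hasDerivAt_Ha3_y a x y z)
  refine ((((hasDerivAt_id y).const_mul (-2)).mul_const z).add (hfH.mul_const x)).congr_deriv ?_
  ring

theorem hasDerivAt_Vaf₃_z (a : ℝ) (f : ℝ → ℝ) (x y z : ℝ) :
    HasDerivAt (fun t => (Vaf a f (x, y, t)).2.2) (4 * z) z := by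
  have hz := ((hasDerivAt_pow 2 z).const_add (2 * (x ^ 2 + y ^ 2))).add_const a
  refine (hz.const_mul 2).congr_deriv ?_
  ring

/-- For any `a` and differentiable `f`, the vortex-plug field `V_{a,f}` is divergence-free:
it is differentiable everywhere and the trace of its Fréchet derivative vanishes. -/
theorem stmt7 (a : ℝ) (f : ℝ → ℝ) (hf : Differentiable ℝ f) (p : ℝ × ℝ × ℝ) :
    DifferentiableAt ℝ (Vaf a f) p ∧
    LinearMap.trace ℝ (ℝ × ℝ × ℝ) (fderiv ℝ (Vaf a f) p).toLinearMap = 0 := by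
  obtain ⟨x, y, z⟩ := p
  have hV := differentiable_Vaf a hf (x, y, z)
  refine ⟨hV, ?_⟩
  rw [trace_eq_sum_partials hV.hasFDerivAt (hasDerivAt_Vaf₁_x a hf x y z)
    (hasDerivAt_Vaf₂_y a hf x y z) (hasDerivAt_Vaf₃_z a f x y z)]
  ring
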